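/- arXiv:1509.01811 — 5 statements merged into one kernel-verified Lean document; each statement's English description precedes it below -/
import Mathlib

section
/- Let Ω ⊆ ℝⁿ be open, u ∈ C¹(Ω, ℝᴺ), Ω' compactly contained in Ω, and A : ℝⁿ → ℝᴺ an affine map. If for every λ > 0 one has ‖Du‖_{L^∞(Ω')} ≤ ‖Du + λ DA‖_{L^∞(Ω')}, then max_{z ∈ closure(Ω')} { Du(z) : DA } ≥ 0, where ':' denotes the Frobenius inner product on N×n matrices. -/
open scoped BigOperators

/-- The gradient matrix `Du(x) ∈ ℝ^{N×n}` of `u : ℝⁿ → ℝᴺ`. -/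
noncomputable def gradm {n N : ℕ} (u : (Fin n → ℝ) → (Fin N → ℝ)) (x : Fin n → ℝ) :
    Matrix (Fin N) (Fin n) ℝ :=
  fun α i => fderiv ℝ u x (Pi.single i 1) α

/-- The Frobenius (Euclidean) norm of an `N×n` matrix. -/
noncomputable def mnorm {n N : ℕ} (M : Matrix (Fin N) (Fin n) ℝ) : ℝ :=
  Real.sqrt (∑ α, ∑ i, (M α i) ^ 2)

/-- The Frobenius inner product `M : P` of two `N×n` matrices. -/
def finner {n N : ℕ} (M P : Matrix (Fin N) (Fin n) ℝ) : ℝ :=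
  ∑ α, ∑ i, M α i * P α i

open Filter Topology

/-! Choose `λ > 0` and a point `z` of the compact set `closure Ω'` where `|Du + λ DA|` attains its
maximum. The hypothesis gives `|Du(z)| ≤ ‖Du‖_∞ ≤ |Du(z) + λ DA|`, and expanding the square yields
`Du(z) : DA ≥ -λ |DA|² / 2`. Hence the maximum of `Du : DA` is at least `-λ |DA|² / 2` for every
`λ > 0`, and letting `λ → 0⁺` gives the claim. -/

section Frobenius

variable {n N : ℕ}

lemma mnorm_nonneg (M : Matrix (Fin N) (Fin n) ℝ) : 0 ≤ mnorm M :=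
  Real.sqrt_nonneg _

lemma sq_mnorm (M : Matrix (Fin N) (Fin n) ℝ) : mnorm M ^ 2 = ∑ α, ∑ i, M α i ^ 2 := by
  rw [mnorm, Real.sq_sqrt]
  positivity

lemma mnorm_add_smul_sq (M P : Matrix (Fin N) (Fin n) ℝ) (lam : ℝ) :
    mnorm (M + lam • P) ^ 2 = mnorm M ^ 2 + 2 * lam * finner M P + lam ^ 2 * mnorm P ^ 2 := by
  simp only [sq_mnorm, finner, Matrix.add_apply, Matrix.smul_apply, smul_eq_mul, Finset.mul_sum,
    ← Finset.sum_add_distrib]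
  refine Finset.sum_congr rfl fun α _ => Finset.sum_congr rfl fun i _ => ?_
  ring

lemma finner_ge_of_mnorm_le_mnorm_add_smul {M P : Matrix (Fin N) (Fin n) ℝ} {lam : ℝ}
    (hlam : 0 < lam) (h : mnorm M ≤ mnorm (M + lam • P)) :
    -(lam * mnorm P ^ 2 / 2) ≤ finner M P := by
  have hsq := pow_le_pow_left₀ (mnorm_nonneg M) h 2
  rw [mnorm_add_smul_sq] at hsq
  nlinarith

lemma continuous_mnorm : Continuous (mnorm : Matrix (Fin N) (Fin n) ℝ → ℝ) := by
  unfold mnorm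
  fun_prop

lemma continuous_finner_left (P : Matrix (Fin N) (Fin n) ℝ) :
    Continuous fun M : Matrix (Fin N) (Fin n) ℝ => finner M P := by
  unfold finner
  fun_prop

end Frobenius

lemma ContDiffOn.continuousOn_gradm {n N : ℕ} {u : (Fin n → ℝ) → (Fin N → ℝ)}
    {Ω : Set (Fin n → ℝ)} (hu : ContDiffOn ℝ 1 u Ω) (hΩ : IsOpen Ω) :
    ContinuousOn (gradm u) Ω := by
  have hfd := hu.continuousOn_fderiv_of_isOpen hΩ le_rfl
  refine continuousOn_pi.2 fun α => continuousOn_pi.2 fun i => ?_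
  exact (continuous_apply α).comp_continuousOn (hfd.clm_apply continuousOn_const)

theorem sSup_finner_nonneg_of_sSup_mnorm_le {X : Type*} [TopologicalSpace X] {n N : ℕ}
    {K : Set X} (hK : IsCompact K) {G : X → Matrix (Fin N) (Fin n) ℝ} (hG : ContinuousOn G K)
    (P : Matrix (Fin N) (Fin n) ℝ)
    (hvar : ∀ lam : ℝ, 0 < lam →
      sSup ((fun y => mnorm (G y)) '' K) ≤ sSup ((fun y => mnorm (G y + lam • P)) '' K)) :
    0 ≤ sSup ((fun y => finner (G y) P) '' K) := by
  rcases K.eq_empty_or_nonempty with rfl | hKne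
  · simp -- `sSup ∅ = 0` in `ℝ`
  have hbound : ∀ lam : ℝ, 0 < lam →
      -(lam * mnorm P ^ 2 / 2) ≤ sSup ((fun y => finner (G y) P) '' K) := by
    intro lam hlam
    obtain ⟨z, hz, hzmax⟩ := hK.exists_sSup_image_eq hKne
      (continuous_mnorm.comp_continuousOn (hG.add continuousOn_const))
    have hGz : mnorm (G z) ≤ mnorm (G z + lam • P) :=
      calc mnorm (G z) ≤ sSup ((fun y => mnorm (G y)) '' K) :=
            le_csSup (hK.bddAbove_image (continuous_mnorm.comp_continuousOn hG)) ⟨z, hz, rfl⟩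
        _ ≤ _ := hvar lam hlam
        _ = _ := hzmax
    have hfin := (continuous_finner_left P).comp_continuousOn hG
    exact (finner_ge_of_mnorm_le_mnorm_add_smul hlam hGz).trans
      (le_csSup (hK.bddAbove_image hfin) ⟨z, hz, rfl⟩)
  have hlim : Tendsto (fun lam : ℝ => -(lam * mnorm P ^ 2 / 2)) (𝓝[>] 0) (𝓝 0) :=
    tendsto_nhdsWithin_of_tendsto_nhds (Continuous.tendsto' (by fun_prop) 0 0 (by simp))
  exact le_of_tendsto hlim (eventually_nhdsWithin_of_forall hbound)

theorem stmt0_general {n N : ℕ} (Ω : Set (Fin n → ℝ)) (hΩ : IsOpen Ω)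
    (u : (Fin n → ℝ) → (Fin N → ℝ)) (hu : ContDiffOn ℝ 1 u Ω)
    (Ω' : Set (Fin n → ℝ)) (hbd : Bornology.IsBounded Ω')
    (hcl : closure Ω' ⊆ Ω)
    (DA : Matrix (Fin N) (Fin n) ℝ)
    (hvar : ∀ lam : ℝ, 0 < lam →
      sSup ((fun y => mnorm (gradm u y)) '' closure Ω') ≤
        sSup ((fun y => mnorm (gradm u y + lam • DA)) '' closure Ω')) :
    0 ≤ sSup ((fun z => finner (gradm u z) DA) '' closure Ω') :=
  sSup_finner_nonneg_of_sSup_mnorm_le hbd.isCompact_closure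
    ((hu.continuousOn_gradm hΩ).mono hcl) DA hvar

/-- Lemma 3.1(a): if `‖Du‖_{L^∞(Ω')} ≤ ‖Du + λ DA‖_{L^∞(Ω')}` for all `λ > 0`,
then `max_{closure Ω'} { Du : DA } ≥ 0`. -/
theorem stmt0 {n N : ℕ} (Ω : Set (Fin n → ℝ)) (hΩ : IsOpen Ω)
    (u : (Fin n → ℝ) → (Fin N → ℝ)) (hu : ContDiffOn ℝ 1 u Ω)
    (Ω' : Set (Fin n → ℝ)) (hΩ' : IsOpen Ω') (hbd : Bornology.IsBounded Ω')
    (hcl : closure Ω' ⊆ Ω)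
    (DA : Matrix (Fin N) (Fin n) ℝ)
    (hvar : ∀ lam : ℝ, 0 < lam →
      sSup ((fun y => mnorm (gradm u y)) '' closure Ω') ≤
        sSup ((fun y => mnorm (gradm u y + lam • DA)) '' closure Ω')) :
    0 ≤ sSup ((fun z => finner (gradm u z) DA) '' closure Ω') :=
  stmt0_general Ω hΩ u hu Ω' hbd hcl DA hvar
end

section
/- Let K be a nonempty compact set, let f, g : K → ℝ be continuous, and define h(t) := max_{y∈K} (f(y) + 2t g(y) + t² c) − max_{y∈K} f(y) for t ≥ 0, where c ≥ 0 is a constant. Then h is convex, h(0) = 0, and the lower right Dini derivative satisfies liminf_{t→0⁺} h(t)/t ≥ max { 2 g(y) : y ∈ K, f(y) = max_K f }. -/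
open scoped BigOperators
open Filter

/-- abstract Danskin-type lemma, Lemma 3.2 in abstract form:
for `h(t) = max_K (f + 2 t g + t² c) − max_K f` with `c ≥ 0`, `h` is convex, `h(0) = 0`, and
the lower right Dini derivative at `0` is at least `max { 2 g(y) : y ∈ K, f(y) = max_K f }`. -/
theorem stmt1 {X : Type*} [TopologicalSpace X] (K : Set X)
    (hK : IsCompact K) (hne : K.Nonempty)
    (f g : X → ℝ) (hf : ContinuousOn f K) (hg : ContinuousOn g K)
    (c : ℝ) (hc : 0 ≤ c)
    (h : ℝ → ℝ)
    (hdef : ∀ t : ℝ, h t =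
      sSup ((fun y => f y + 2 * t * g y + t ^ 2 * c) '' K) - sSup (f '' K)) :
    ConvexOn ℝ (Set.Ici (0 : ℝ)) h ∧ h 0 = 0 ∧
      sSup ((fun y => 2 * g y) '' {y ∈ K | f y = sSup (f '' K)}) ≤
        Filter.liminf (fun t => h t / t) (nhdsWithin 0 (Set.Ioi 0)) := by
  have hKc : ∀ t : ℝ, ContinuousOn (fun y => f y + 2 * t * g y + t ^ 2 * c) K := fun t =>
    (hf.add (continuousOn_const.mul hg)).add continuousOn_const
  have hbdd : ∀ t : ℝ, BddAbove ((fun y => f y + 2 * t * g y + t ^ 2 * c) '' K) := fun t =>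
    (hK.image_of_continuousOn (hKc t)).bddAbove
  have hbddf : BddAbove (f '' K) := (hK.image_of_continuousOn hf).bddAbove
  have hbddg : BddAbove (g '' K) := (hK.image_of_continuousOn hg).bddAbove
  have hne' : ∀ t : ℝ, ((fun y => f y + 2 * t * g y + t ^ 2 * c) '' K).Nonempty :=
    fun t => hne.image _
  set M := sSup (f '' K) with hM
  set G := sSup (g '' K) with hG
  -- h 0 = 0
  have h0 : h 0 = 0 := by
    rw [hdef]
    have : (fun y => f y + 2 * (0:ℝ) * g y + (0:ℝ) ^ 2 * c) = f := by
      funext y; ring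
    rw [this]
    simp [hM]
  -- convexity
  have hconv : ConvexOn ℝ (Set.Ici (0 : ℝ)) h := by
    refine ⟨convex_Ici 0, ?_⟩
    intro s _ t _ a b ha hb hab
    simp only [smul_eq_mul]
    rw [hdef, hdef, hdef]
    have key : sSup ((fun y => f y + 2 * (a * s + b * t) * g y + (a * s + b * t) ^ 2 * c) '' K)
        ≤ a * sSup ((fun y => f y + 2 * s * g y + s ^ 2 * c) '' K)
          + b * sSup ((fun y => f y + 2 * t * g y + t ^ 2 * c) '' K) := by
      apply csSup_le (hne' _)
      rintro x ⟨y, hy, rfl⟩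
      have h1 : f y + 2 * s * g y + s ^ 2 * c
          ≤ sSup ((fun y => f y + 2 * s * g y + s ^ 2 * c) '' K) :=
        le_csSup (hbdd s) ⟨y, hy, rfl⟩
      have h2 : f y + 2 * t * g y + t ^ 2 * c
          ≤ sSup ((fun y => f y + 2 * t * g y + t ^ 2 * c) '' K) :=
        le_csSup (hbdd t) ⟨y, hy, rfl⟩
      have hq : f y + 2 * (a * s + b * t) * g y + (a * s + b * t) ^ 2 * c
          ≤ a * (f y + 2 * s * g y + s ^ 2 * c) + b * (f y + 2 * t * g y + t ^ 2 * c) := by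
        have ha' : a = 1 - b := by linarith
        subst ha'
        nlinarith [mul_nonneg (mul_nonneg (mul_nonneg ha hb) (sq_nonneg (s - t))) hc]
      calc f y + 2 * (a * s + b * t) * g y + (a * s + b * t) ^ 2 * c
          ≤ a * (f y + 2 * s * g y + s ^ 2 * c) + b * (f y + 2 * t * g y + t ^ 2 * c) := hq
        _ ≤ _ := add_le_add (mul_le_mul_of_nonneg_left h1 ha) (mul_le_mul_of_nonneg_left h2 hb)
    have hMM : a * M + b * M = M := by rw [← add_mul, hab, one_mul]
    linarith [key]
  refine ⟨hconv, h0, ?_⟩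
  -- the Dini derivative bound
  obtain ⟨y₀, hy₀K, hy₀eq, _⟩ := hK.exists_sSup_image_eq_and_ge hne hf
  have hy₀M : f y₀ = M := hy₀eq.symm
  refine csSup_le ⟨2 * g y₀, ⟨y₀, ⟨hy₀K, hy₀M⟩, rfl⟩⟩ ?_
  rintro x ⟨y, ⟨hyK, hyM⟩, rfl⟩
  have hIoo : Set.Ioo (0 : ℝ) 1 ∈ nhdsWithin 0 (Set.Ioi 0) :=
    Ioo_mem_nhdsGT_of_mem (by constructor <;> norm_num)
  -- eventual upper bound, for coboundedness
  have hub : ∀ᶠ t in nhdsWithin (0:ℝ) (Set.Ioi 0), h t / t ≤ 2 * G + c := by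
    filter_upwards [hIoo] with t ht
    obtain ⟨ht0, ht1⟩ := ht
    have hS : sSup ((fun y => f y + 2 * t * g y + t ^ 2 * c) '' K)
        ≤ M + 2 * t * G + t ^ 2 * c := by
      apply csSup_le (hne' t)
      rintro x ⟨z, hz, rfl⟩
      have h1 : f z ≤ M := le_csSup hbddf ⟨z, hz, rfl⟩
      have h2 : g z ≤ G := le_csSup hbddg ⟨z, hz, rfl⟩
      show f z + 2 * t * g z + t ^ 2 * c ≤ M + 2 * t * G + t ^ 2 * c
      nlinarith [mul_le_mul_of_nonneg_left h2 ht0.le]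
    have hht : h t ≤ 2 * t * G + t ^ 2 * c := by rw [hdef]; linarith
    rw [div_le_iff₀ ht0]
    nlinarith [mul_nonneg hc (by nlinarith : (0:ℝ) ≤ t * (1 - t))]
  refine le_liminf_of_le (isCoboundedUnder_ge_of_eventually_le _ hub) ?_
  filter_upwards [self_mem_nhdsWithin] with t ht
  have ht0 : (0:ℝ) < t := ht
  have hle : f y + 2 * t * g y + t ^ 2 * c
      ≤ sSup ((fun y => f y + 2 * t * g y + t ^ 2 * c) '' K) :=
    le_csSup (hbdd t) ⟨y, hyK, rfl⟩
  have hht : 2 * t * g y + t ^ 2 * c ≤ h t := by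
    rw [hdef]; rw [hyM] at hle; linarith
  rw [le_div_iff₀ ht0]
  nlinarith [mul_nonneg (sq_nonneg t) hc]
end

section
/- For a twice continuously differentiable map u : Ω ⊆ ℝⁿ → ℝᴺ, the two vector fields Du ⊗ Du : D²u and |Du|² [Du]^⊥ Δu are pointwise orthogonal in ℝᴺ, where [Du]^⊥ is the orthogonal projection onto the orthogonal complement of the range of Du. Consequently, Δ_∞ u := Du ⊗ Du : D²u + |Du|² [Du]^⊥ Δu = 0 on Ω if and only if both Du ⊗ Du : D²u = 0 and |Du|² [Du]^⊥ Δu = 0 on Ω. -/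
/-!
`Du ⊗ Du : D²u = Du(v)` with `vᵢ = Σ_{β,j} D_j u_β D²_{ij} u_β`, so it lies in the range of `Du`,
while `|Du|² [Du]^⊥ Δu` lies in its orthogonal complement. By Pythagoras a sum of two orthogonal
vectors vanishes only if both summands do.
-/

open scoped BigOperators

noncomputable section

/-- Directional derivative `D_i u (x) ∈ ℝᴺ`. -/
def Dc {n N : ℕ} (u : EuclideanSpace ℝ (Fin n) → EuclideanSpace ℝ (Fin N))
    (x : EuclideanSpace ℝ (Fin n)) (i : Fin n) : EuclideanSpace ℝ (Fin N) :=
  fderiv ℝ u x (EuclideanSpace.single i 1)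

/-- Second derivative `D²_{ij} u (x) ∈ ℝᴺ`. -/
def Hc {n N : ℕ} (u : EuclideanSpace ℝ (Fin n) → EuclideanSpace ℝ (Fin N))
    (x : EuclideanSpace ℝ (Fin n)) (i j : Fin n) : EuclideanSpace ℝ (Fin N) :=
  fderiv ℝ (fun y => Dc u y j) x (EuclideanSpace.single i 1)

/-- The tangential vector field `Du ⊗ Du : D²u`, with `α`-component
`Σ_{β,i,j} D_i u_α D_j u_β D²_{ij} u_β`. -/
def tangPart {n N : ℕ} (u : EuclideanSpace ℝ (Fin n) → EuclideanSpace ℝ (Fin N))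
    (x : EuclideanSpace ℝ (Fin n)) : EuclideanSpace ℝ (Fin N) :=
  (WithLp.equiv 2 (Fin N → ℝ)).symm
    (fun α => ∑ β, ∑ i, ∑ j, Dc u x i α * Dc u x j β * Hc u x i j β)

/-- The componentwise Laplacian `Δu = Σ_i D²_{ii} u`. -/
def lapl {n N : ℕ} (u : EuclideanSpace ℝ (Fin n) → EuclideanSpace ℝ (Fin N))
    (x : EuclideanSpace ℝ (Fin n)) : EuclideanSpace ℝ (Fin N) :=
  ∑ i, Hc u x i i

/-- The range of `Du(x)` as a subspace of `ℝᴺ`. -/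
def rngDu {n N : ℕ} (u : EuclideanSpace ℝ (Fin n) → EuclideanSpace ℝ (Fin N))
    (x : EuclideanSpace ℝ (Fin n)) : Submodule ℝ (EuclideanSpace ℝ (Fin N)) :=
  LinearMap.range ((fderiv ℝ u x).toLinearMap)

/-- The normal vector field `|Du|² [Du]^⊥ Δu`, where `[Du]^⊥` is the orthogonal
projection onto the orthogonal complement of the range of `Du`. -/
def normPart {n N : ℕ} (u : EuclideanSpace ℝ (Fin n) → EuclideanSpace ℝ (Fin N))
    (x : EuclideanSpace ℝ (Fin n)) : EuclideanSpace ℝ (Fin N) :=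
  (∑ α, ∑ i, (Dc u x i α) ^ 2) •
    ((Submodule.orthogonalProjectionOnto ((rngDu u x)ᗮ) (lapl u x) : (rngDu u x)ᗮ) :
      EuclideanSpace ℝ (Fin N))

end

theorem add_eq_zero_iff_of_inner_eq_zero {E : Type*} [NormedAddCommGroup E]
    [InnerProductSpace ℝ E] {a b : E} (h : inner ℝ a b = 0) :
    a + b = 0 ↔ a = 0 ∧ b = 0 := by
  refine ⟨fun hab => ?_, fun ⟨ha, hb⟩ => by rw [ha, hb, add_zero]⟩
  have hsq : ‖a‖ * ‖a‖ + ‖b‖ * ‖b‖ = 0 := by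
    rw [← norm_add_sq_eq_norm_sq_add_norm_sq_real h, hab, norm_zero, mul_zero]
  have ha : ‖a‖ = 0 := by nlinarith [norm_nonneg a, norm_nonneg b]
  have hb : ‖b‖ = 0 := by nlinarith [norm_nonneg a, norm_nonneg b]
  exact ⟨norm_eq_zero.mp ha, norm_eq_zero.mp hb⟩

section

variable {n N : ℕ} (u : EuclideanSpace ℝ (Fin n) → EuclideanSpace ℝ (Fin N))
  (x : EuclideanSpace ℝ (Fin n))

theorem tangPart_eq_fderiv_apply :
    tangPart u x = fderiv ℝ u x
      (∑ i, (∑ β, ∑ j, Dc u x j β * Hc u x i j β) • EuclideanSpace.single i (1 : ℝ)) := by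
  ext α
  simp only [tangPart, map_sum, map_smul, WithLp.equiv_symm_apply, PiLp.toLp_apply,
    WithLp.ofLp_sum, WithLp.ofLp_smul, Finset.sum_apply, Pi.smul_apply, smul_eq_mul]
  rw [Finset.sum_comm]
  refine Finset.sum_congr rfl fun i _ => ?_
  rw [Finset.sum_mul]
  refine Finset.sum_congr rfl fun β _ => ?_
  rw [Finset.sum_mul]
  refine Finset.sum_congr rfl fun j _ => ?_
  simp only [Dc]
  ring

theorem tangPart_mem_rngDu : tangPart u x ∈ rngDu u x :=
  ⟨_, (tangPart_eq_fderiv_apply u x).symm⟩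

theorem normPart_mem_orthogonal_rngDu : normPart u x ∈ (rngDu u x)ᗮ :=
  Submodule.smul_mem _ _ (Submodule.coe_mem _)

theorem inner_tangPart_normPart : inner ℝ (tangPart u x) (normPart u x) = 0 :=
  Submodule.inner_right_of_mem_orthogonal (tangPart_mem_rngDu u x)
    (normPart_mem_orthogonal_rngDu u x)

end

theorem stmt6_general {n N : ℕ} (Ω : Set (EuclideanSpace ℝ (Fin n)))
    (u : EuclideanSpace ℝ (Fin n) → EuclideanSpace ℝ (Fin N)) :
    (∀ x ∈ Ω, (inner ℝ (tangPart u x) (normPart u x) : ℝ) = 0) ∧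
    ((∀ x ∈ Ω, tangPart u x + normPart u x = 0) ↔
      (∀ x ∈ Ω, tangPart u x = 0) ∧ (∀ x ∈ Ω, normPart u x = 0)) := by
  refine ⟨fun x _ => inner_tangPart_normPart u x, ?_⟩
  simp only [add_eq_zero_iff_of_inner_eq_zero (inner_tangPart_normPart u _)]
  exact forall₂_and

/-- the fields `Du ⊗ Du : D²u` and `|Du|² [Du]^⊥ Δu` are pointwise
orthogonal; consequently `Δ_∞ u = 0` at a point iff both parts vanish there. -/
theorem stmt6 {n N : ℕ} (Ω : Set (EuclideanSpace ℝ (Fin n))) (hΩ : IsOpen Ω)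
    (u : EuclideanSpace ℝ (Fin n) → EuclideanSpace ℝ (Fin N))
    (hu : ContDiffOn ℝ 2 u Ω) :
    (∀ x ∈ Ω, (inner ℝ (tangPart u x) (normPart u x) : ℝ) = 0) ∧
    ((∀ x ∈ Ω, tangPart u x + normPart u x = 0) ↔
      (∀ x ∈ Ω, tangPart u x = 0) ∧ (∀ x ∈ Ω, normPart u x = 0)) :=
  stmt6_general Ω u
end

section
/- Let Ω ⊆ ℝⁿ be open, u ∈ C²(Ω), and suppose |Du| has no local minima in Ω. Then u is a classical solution of Du ⊗ Du : D²u = 0 on Ω if and only if for every bounded open Ω' with closure in Ω and every affine function A that is parallel to the tangent map of ξ|Du|² at some point x ∈ closure(Ω') where |Du(x)| = sup_{Ω'}|Du| (i.e. DA = ξ D(|Du|²)(x) for some ξ ∈ ℝ), one has ‖Du‖_{L^∞(Ω')} ≤ ‖Du + DA‖_{L^∞(Ω')}. -/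
open scoped BigOperators

/-- The gradient vector `Du(x) ∈ ℝⁿ` of a scalar function `u : ℝⁿ → ℝ`. -/
noncomputable def gradv {n : ℕ} (u : (Fin n → ℝ) → ℝ) (x : Fin n → ℝ) : Fin n → ℝ :=
  fun i => fderiv ℝ u x (Pi.single i 1)

/-- The Euclidean norm of a vector in `ℝⁿ`. -/
noncomputable def gnorm {n : ℕ} (z : Fin n → ℝ) : ℝ :=
  Real.sqrt (∑ i, (z i) ^ 2)

/-- The feeble second-order superderivatives `D^{2,+}u(x)`: symmetric matrices `X` with
`Du(x) ≠ 0` and `u(x+z) ≤ u(x) + Du(x)·z + ½ X : z ⊗ z + o(|z|²)` as `z → 0`. -/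
def D2plus {n : ℕ} (u : (Fin n → ℝ) → ℝ) (x : Fin n → ℝ) :
    Set (Matrix (Fin n) (Fin n) ℝ) :=
  {X | X.IsSymm ∧ gradv u x ≠ 0 ∧
    ∀ ε : ℝ, 0 < ε → ∃ δ : ℝ, 0 < δ ∧ ∀ z : Fin n → ℝ, gnorm z < δ →
      u (x + z) ≤ u x + (∑ i, gradv u x i * z i)
        + (1 / 2) * (∑ i, ∑ j, X i j * z i * z j) + ε * (gnorm z) ^ 2}

/-- The `L^∞` norm `‖Du‖_{L^∞(S)}` of the gradient over a set `S`. -/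
noncomputable def supDu {n : ℕ} (u : (Fin n → ℝ) → ℝ) (S : Set (Fin n → ℝ)) : ℝ :=
  sSup ((fun y => gnorm (gradv u y)) '' S)

/-- The hessian matrix `D²u(x)` of a scalar function. -/
noncomputable def hessv {n : ℕ} (u : (Fin n → ℝ) → ℝ) (x : Fin n → ℝ) (i j : Fin n) : ℝ :=
  fderiv ℝ (fun y => gradv u y j) x (Pi.single i 1)

/-! ### Auxiliary facts about `gnorm` -/

lemma gnorm_nonneg {n : ℕ} (z : Fin n → ℝ) : 0 ≤ gnorm z := Real.sqrt_nonneg _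

lemma gnorm_sq {n : ℕ} (z : Fin n → ℝ) : gnorm z ^ 2 = ∑ i, (z i) ^ 2 :=
  Real.sq_sqrt (Finset.sum_nonneg fun _ _ => sq_nonneg _)

lemma gnorm_le_gnorm {n : ℕ} {a b : Fin n → ℝ} (h : ∑ i, (a i)^2 ≤ ∑ i, (b i)^2) :
    gnorm a ≤ gnorm b := Real.sqrt_le_sqrt h

lemma gnorm_cont {n : ℕ} : Continuous (gnorm : (Fin n → ℝ) → ℝ) := by
  apply Real.continuous_sqrt.comp
  exact continuous_finset_sum _ (fun i _ => (continuous_apply i).pow 2)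

/-- Value of a continuous function at a closure point is at most the sup over the set. -/
lemma le_sSup_closure {n : ℕ} {S : Set (Fin n → ℝ)} (hb : Bornology.IsBounded S)
    {f : (Fin n → ℝ) → ℝ} (hf : ContinuousOn f (closure S)) {x : Fin n → ℝ}
    (hx : x ∈ closure S) : f x ≤ sSup (f '' S) := by
  have hK : IsCompact (closure S) :=
    Metric.isCompact_of_isClosed_isBounded isClosed_closure hb.closure
  have hbdd : BddAbove (f '' closure S) := hK.bddAbove_image hf
  have hbdd' : BddAbove (f '' S) := hbdd.mono (Set.image_mono subset_closure)
  have h1 : f x ∈ closure (f '' S) := hf.image_closure ⟨x, hx, rfl⟩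
  have h2 : closure (f '' S) ⊆ Set.Iic (sSup (f '' S)) :=
    closure_minimal (fun a ha => le_csSup hbdd' ha) isClosed_Iic
  exact h2 h1

/-- Algebraic expansion of `∑ (aᵢ + t vᵢ)²`. -/
lemma sum_add_smul_sq {n : ℕ} (a v : Fin n → ℝ) (t : ℝ) :
    ∑ i, (a i + t * v i)^2
      = ∑ i, (a i)^2 + 2*t*(∑ i, a i * v i) + t^2 * ∑ i, (v i)^2 := by
  rw [Finset.mul_sum, Finset.mul_sum, ← Finset.sum_add_distrib, ← Finset.sum_add_distrib]
  exact Finset.sum_congr rfl fun i _ => by ring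

/-- Dot-product identity. -/
lemma aux_dot {n : ℕ} (a : Fin n → ℝ) (h : Fin n → Fin n → ℝ) :
    ∑ i, a i * (∑ k, 2 * a k * h i k) = 2 * ∑ i, ∑ k, a i * a k * h i k := by
  rw [Finset.mul_sum]
  refine Finset.sum_congr rfl fun i _ => ?_
  rw [Finset.mul_sum, Finset.mul_sum]
  exact Finset.sum_congr rfl fun k _ => by ring

section aux
variable {n : ℕ} {Ω : Set (Fin n → ℝ)} (hΩ : IsOpen Ω)
  {u : (Fin n → ℝ) → ℝ} (hu : ContDiffOn ℝ 2 u Ω)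
include hΩ hu

lemma aux_grad_cont (i : Fin n) : ContinuousOn (fun y => gradv u y i) Ω := by
  have h1 : ContinuousOn (fderiv ℝ u) Ω :=
    hu.continuousOn_fderiv_of_isOpen hΩ (by norm_num)
  exact (ContinuousLinearMap.apply ℝ ℝ (Pi.single i 1)).continuous.comp_continuousOn h1

lemma aux_grad_hasfderiv {x : Fin n → ℝ} (hx : x ∈ Ω) (k : Fin n) :
    HasFDerivAt (fun y => gradv u y k)
      ((ContinuousLinearMap.apply ℝ ℝ (Pi.single k 1)).comp
        (fderiv ℝ (fderiv ℝ u) x)) x := by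
  have h1 : ContDiffOn ℝ 1 (fderiv ℝ u) Ω := hu.fderiv_of_isOpen hΩ (by norm_num)
  have h2 : DifferentiableAt ℝ (fderiv ℝ u) x :=
    ((h1.differentiableOn one_ne_zero).differentiableAt (hΩ.mem_nhds hx))
  exact (ContinuousLinearMap.apply ℝ ℝ (Pi.single k 1)).hasFDerivAt.comp x h2.hasFDerivAt

lemma aux_hessv_eq {x : Fin n → ℝ} (hx : x ∈ Ω) (i k : Fin n) :
    hessv u x i k = fderiv ℝ (fderiv ℝ u) x (Pi.single i 1) (Pi.single k 1) := by
  have := (aux_grad_hasfderiv hΩ hu hx k).fderiv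
  rw [hessv, this]
  rfl

lemma aux_hess_cont (i k : Fin n) : ContinuousOn (fun x => hessv u x i k) Ω := by
  have h1 : ContDiffOn ℝ 1 (fderiv ℝ u) Ω := hu.fderiv_of_isOpen hΩ (by norm_num)
  have h2 : ContinuousOn (fderiv ℝ (fderiv ℝ u)) Ω :=
    h1.continuousOn_fderiv_of_isOpen hΩ le_rfl
  have h3 : ContinuousOn (fun x => fderiv ℝ (fderiv ℝ u) x (Pi.single i 1) (Pi.single k 1)) Ω :=
    (ContinuousLinearMap.apply ℝ ℝ (Pi.single k 1)).continuous.comp_continuousOn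
      ((ContinuousLinearMap.apply ℝ (_ →L[ℝ] ℝ) (Pi.single i 1)).continuous.comp_continuousOn h2)
  exact h3.congr (fun x hx => aux_hessv_eq hΩ hu hx i k)

/-- The gradient of `|Du|²`. -/
lemma aux_v_eq {x : Fin n → ℝ} (hx : x ∈ Ω) (i : Fin n) :
    fderiv ℝ (fun z => ∑ k, (gradv u z k) ^ 2) x (Pi.single i 1)
      = ∑ k, 2 * gradv u x k * hessv u x i k := by
  have hsum : HasFDerivAt (fun z => ∑ k, (gradv u z k) ^ 2)
      (∑ k, (gradv u x k •
        ((ContinuousLinearMap.apply ℝ ℝ (Pi.single k 1)).comp (fderiv ℝ (fderiv ℝ u) x)) +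
        gradv u x k •
        ((ContinuousLinearMap.apply ℝ ℝ (Pi.single k 1)).comp (fderiv ℝ (fderiv ℝ u) x)))) x := by
    apply HasFDerivAt.fun_sum
    intro k _
    have h := aux_grad_hasfderiv hΩ hu hx k
    have h2 := h.fun_mul h
    simpa [pow_two] using h2
  rw [hsum.fderiv]
  simp only [ContinuousLinearMap.coe_sum', Finset.sum_apply, ContinuousLinearMap.add_apply,
    ContinuousLinearMap.coe_smul', Pi.smul_apply, ContinuousLinearMap.coe_comp',
    Function.comp_apply, smul_eq_mul]
  refine Finset.sum_congr rfl (fun k _ => ?_)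
  rw [aux_hessv_eq hΩ hu hx i k]
  simp only [ContinuousLinearMap.apply_apply]
  ring

end aux

/-- Corollary 4.2: for `u ∈ C²(Ω)` with `|Du|` having no local minima,
`Du ⊗ Du : D²u = 0` on `Ω` iff for every `Ω' ⋐ Ω` and every affine `A` with
`DA = ξ D(|Du|²)(x)` for some `ξ ∈ ℝ` and `x ∈ Ω'(u)`, one has
`‖Du‖_{L^∞(Ω')} ≤ ‖Du + DA‖_{L^∞(Ω')}`. -/
theorem stmt10 {n : ℕ} (Ω : Set (Fin n → ℝ)) (hΩ : IsOpen Ω)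
    (u : (Fin n → ℝ) → ℝ) (hu : ContDiffOn ℝ 2 u Ω)
    (hmin : ∀ x ∈ Ω, ¬ IsLocalMin (fun y => gnorm (gradv u y)) x) :
    (∀ x ∈ Ω, ∑ i, ∑ j, gradv u x i * gradv u x j * hessv u x i j = 0) ↔
      (∀ Ω' : Set (Fin n → ℝ), IsOpen Ω' → Bornology.IsBounded Ω' → closure Ω' ⊆ Ω →
        ∀ x ∈ closure Ω', gnorm (gradv u x) = supDu u Ω' → ∀ ξ : ℝ,
          supDu u Ω' ≤
            sSup ((fun y => gnorm (gradv u y +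
              ξ • (fun i => fderiv ℝ (fun z => ∑ k, (gradv u z k) ^ 2) x
                (Pi.single i 1)))) '' Ω')) := by
  have hGcont : ContinuousOn (fun y => gradv u y) Ω :=
    continuousOn_pi.mpr (fun i => aux_grad_cont hΩ hu i)
  constructor
  · -- forward direction
    intro hPDE Ω' hO hB hcl x hx hmax ξ
    set v : Fin n → ℝ :=
      fun i => fderiv ℝ (fun z => ∑ k, (gradv u z k) ^ 2) x (Pi.single i 1) with hv
    have hxΩ : x ∈ Ω := hcl hx
    have hdot : ∑ i, gradv u x i * v i = 0 := by
      have h1 : ∀ i, v i = ∑ k, 2 * gradv u x k * hessv u x i k :=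
        fun i => aux_v_eq hΩ hu hxΩ i
      calc ∑ i, gradv u x i * v i
          = ∑ i, gradv u x i * (∑ k, 2 * gradv u x k * hessv u x i k) :=
            Finset.sum_congr rfl fun i _ => by rw [h1 i]
        _ = 2 * ∑ i, ∑ k, gradv u x i * gradv u x k * hessv u x i k := aux_dot _ _
        _ = 0 := by rw [hPDE x hxΩ]; ring
    have hle : gnorm (gradv u x) ≤ gnorm (gradv u x + ξ • v) := by
      apply gnorm_le_gnorm
      have : ∀ i, (gradv u x + ξ • v) i = gradv u x i + ξ * v i := fun i => by
        simp [Pi.smul_apply, smul_eq_mul]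
      calc ∑ i, (gradv u x i)^2
          ≤ ∑ i, (gradv u x i)^2 + ξ^2 * ∑ i, (v i)^2 := by
            nlinarith [Finset.sum_nonneg (fun i (_ : i ∈ Finset.univ) => sq_nonneg (v i)),
              sq_nonneg ξ]
        _ = ∑ i, (gradv u x i + ξ * v i)^2 := by
            rw [sum_add_smul_sq, hdot]; ring
        _ = ∑ i, ((gradv u x + ξ • v) i)^2 :=
            Finset.sum_congr rfl fun i _ => by rw [this i]
    have hfc : ContinuousOn (fun y => gnorm (gradv u y + ξ • v)) (closure Ω') := by
      apply gnorm_cont.comp_continuousOn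
      exact ((hGcont.mono hcl).add continuousOn_const)
    calc supDu u Ω' = gnorm (gradv u x) := hmax.symm
      _ ≤ gnorm (gradv u x + ξ • v) := hle
      _ ≤ sSup ((fun y => gnorm (gradv u y + ξ • v)) '' Ω') := le_sSup_closure hB hfc hx
  · -- reverse direction
    intro h x₀ hx₀
    by_contra hc0
    set c : ℝ := ∑ i, ∑ j, gradv u x₀ i * gradv u x₀ j * hessv u x₀ i j with hc
    have habs : 0 < |c| := abs_pos.mpr hc0
    set Ψ : ((Fin n → ℝ) × (Fin n → ℝ)) → ℝ :=
      fun p => ∑ i, gradv u p.2 i * ∑ k, 2 * gradv u p.1 k * hessv u p.1 i k with hΨ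
    have hΨcont : ContinuousOn Ψ (Ω ×ˢ Ω) := by
      apply continuousOn_finset_sum
      intro i _
      apply ContinuousOn.mul
      · exact (aux_grad_cont hΩ hu i).comp continuous_snd.continuousOn (fun p hp => hp.2)
      · apply continuousOn_finset_sum
        intro k _
        apply ContinuousOn.mul
        · exact continuousOn_const.mul
            ((aux_grad_cont hΩ hu k).comp continuous_fst.continuousOn (fun p hp => hp.1))
        · exact (aux_hess_cont hΩ hu i k).comp continuous_fst.continuousOn (fun p hp => hp.1)
    have hΨx₀ : Ψ (x₀, x₀) = 2 * c := aux_dot _ _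
    -- find ε such that Ψ stays close to 2c
    have hcat : ContinuousAt Ψ (x₀, x₀) :=
      hΨcont.continuousAt ((hΩ.prod hΩ).mem_nhds ⟨hx₀, hx₀⟩)
    have hev : ∀ᶠ p in nhds (x₀, x₀), dist (Ψ p) (2 * c) < |c| := by
      have h1 : ∀ᶠ t in nhds (Ψ (x₀, x₀)), dist t (2 * c) < |c| := by
        rw [hΨx₀]
        filter_upwards [Metric.ball_mem_nhds (2 * c) habs] with t ht
        exact ht
      exact hcat.eventually h1
    obtain ⟨ε, hε, hεp⟩ := Metric.eventually_nhds_iff.mp hev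
    -- a radius for open subsets of Ω
    obtain ⟨r₀, hr₀, hball₀⟩ := Metric.isOpen_iff.mp hΩ x₀ hx₀
    set ρ : ℝ := min (ε / 2) (r₀ / 2) with hρdef
    have hρ : 0 < ρ := lt_min (by linarith) (by linarith)
    set Ω' : Set (Fin n → ℝ) := Metric.ball x₀ ρ with hΩ'
    have hclcb : closure Ω' ⊆ Metric.closedBall x₀ ρ := Metric.closure_ball_subset_closedBall
    have hclΩ : closure Ω' ⊆ Ω := fun y hy => hball₀ (by
      have := hclcb hy
      rw [Metric.mem_closedBall] at this
      rw [Metric.mem_ball]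
      calc dist y x₀ ≤ ρ := this
        _ ≤ r₀ / 2 := min_le_right _ _
        _ < r₀ := by linarith)
    have hΩ'ne : Ω'.Nonempty := ⟨x₀, Metric.mem_ball_self hρ⟩
    -- maximum point of |Du| on the closure
    have hK : IsCompact (closure Ω') :=
      Metric.isCompact_of_isClosed_isBounded isClosed_closure Metric.isBounded_ball.closure
    have hfc : ContinuousOn (fun y => gnorm (gradv u y)) (closure Ω') :=
      gnorm_cont.comp_continuousOn (hGcont.mono hclΩ)
    obtain ⟨xr, hxrK, hxrmax⟩ :=
      hK.exists_isMaxOn ⟨x₀, subset_closure (Metric.mem_ball_self hρ)⟩ hfc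
    set M : ℝ := gnorm (gradv u xr) with hM
    have hxrΩ : xr ∈ Ω := hclΩ hxrK
    have hsup : gnorm (gradv u xr) = supDu u Ω' := by
      refine le_antisymm (le_sSup_closure Metric.isBounded_ball hfc hxrK) ?_
      refine csSup_le (hΩ'ne.image _) ?_
      rintro a ⟨y, hy, rfl⟩
      exact hxrmax (subset_closure hy)
    -- the vector v
    set v : Fin n → ℝ :=
      fun i => fderiv ℝ (fun z => ∑ k, (gradv u z k) ^ 2) xr (Pi.single i 1) with hv
    have hveq : ∀ i, v i = ∑ k, 2 * gradv u xr k * hessv u xr i k :=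
      fun i => aux_v_eq hΩ hu hxrΩ i
    -- Ψ control on Ω'
    have hΨy : ∀ y ∈ closure Ω', dist (∑ i, gradv u y i * v i) (2 * c) < |c| := by
      intro y hy
      have hyd : dist y x₀ ≤ ρ := Metric.mem_closedBall.mp (hclcb hy)
      have hxd : dist xr x₀ ≤ ρ := Metric.mem_closedBall.mp (hclcb hxrK)
      have hdist : dist ((xr, y) : (Fin n → ℝ) × (Fin n → ℝ)) (x₀, x₀) < ε := by
        rw [Prod.dist_eq]
        have : ρ < ε := lt_of_le_of_lt (min_le_left _ _) (by linarith)
        exact max_lt (lt_of_le_of_lt hxd this) (lt_of_le_of_lt hyd this)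
      have := hεp hdist
      simpa [hΨ, fun i => hveq i] using this
    -- sign normalization
    set s : ℝ := if 0 < c then 1 else -1 with hs
    have hsc : s * c = |c| := by
      rcases lt_trichotomy 0 c with hlt | heq | hgt
      · rw [hs, if_pos hlt, abs_of_pos hlt]; ring
      · exact absurd heq.symm hc0
      · rw [hs, if_neg (by linarith), abs_of_neg hgt]; ring
    have hs2 : s ^ 2 = 1 := by
      rcases lt_or_ge 0 c with hlt | hge
      · rw [hs, if_pos hlt]; norm_num
      · rw [hs, if_neg (not_lt.mpr hge)]; norm_num
    have hΨge : ∀ y ∈ closure Ω', |c| ≤ s * (∑ i, gradv u y i * v i) := by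
      intro y hy
      have hd := hΨy y hy
      rw [Real.dist_eq, abs_lt] at hd
      rcases lt_or_ge 0 c with hlt | hge
      · rw [hs, if_pos hlt]
        rw [abs_of_pos hlt] at hd ⊢
        linarith
      · have hgt : c < 0 := lt_of_le_of_ne hge hc0
        rw [hs, if_neg (not_lt.mpr hge)]
        rw [abs_of_neg hgt] at hd ⊢
        linarith
    -- bounds
    set V : ℝ := gnorm v + 1 with hV
    have hV0 : 0 < V := lt_of_lt_of_le one_pos (by
      have := gnorm_nonneg v
      linarith)
    have hvV : ∑ i, (v i)^2 ≤ V ^ 2 := by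
      rw [← gnorm_sq]
      have h1 : gnorm v ≤ V := by rw [hV]; linarith
      exact pow_le_pow_left₀ (gnorm_nonneg v) h1 2
    set t : ℝ := |c| / V ^ 2 with ht
    have ht0 : 0 < t := div_pos habs (pow_pos hV0 2)
    have htV : t * V ^ 2 = |c| := div_mul_cancel₀ _ (ne_of_gt (pow_pos hV0 2))
    set ξ : ℝ := -(s * t) with hξ
    -- positivity of M
    have hM0 : 0 < M := by
      have hex : ∃ i, gradv u x₀ i ≠ 0 := by
        by_contra hno
        push_neg at hno
        apply hc0
        rw [hc]
        refine Finset.sum_eq_zero fun i _ => Finset.sum_eq_zero fun j _ => by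
          rw [hno i]; ring
      obtain ⟨i0, hi0⟩ := hex
      have h1 : 0 < gnorm (gradv u x₀) := by
        rw [gnorm]
        apply Real.sqrt_pos.mpr
        apply Finset.sum_pos' (fun i _ => sq_nonneg _)
        exact ⟨i0, Finset.mem_univ _, pow_pos (abs_pos.mpr hi0) 2 |>.trans_le (by rw [sq_abs])⟩
      exact lt_of_lt_of_le h1 (hxrmax (subset_closure (Metric.mem_ball_self hρ)))
    -- key pointwise bound
    have hbound : ∀ y ∈ Ω',
        gnorm (gradv u y + ξ • v) ≤ Real.sqrt (M ^ 2 - t * |c|) := by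
      intro y hy
      rw [gnorm]
      apply Real.sqrt_le_sqrt
      have heq : ∀ i, (gradv u y + ξ • v) i = gradv u y i + ξ * v i := fun i => by
        simp [Pi.smul_apply, smul_eq_mul]
      have e1 : ∑ i, ((gradv u y + ξ • v) i)^2
          = ∑ i, (gradv u y i)^2 + 2*ξ*(∑ i, gradv u y i * v i) + ξ^2 * ∑ i, (v i)^2 := by
        rw [← sum_add_smul_sq]
        exact Finset.sum_congr rfl fun i _ => by rw [heq i]
      rw [e1]
      have b1 : ∑ i, (gradv u y i)^2 ≤ M ^ 2 := by
        rw [← gnorm_sq]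
        exact pow_le_pow_left₀ (gnorm_nonneg _) (hxrmax (subset_closure hy)) 2
      have b2 : 2*ξ*(∑ i, gradv u y i * v i) ≤ -(2 * t * |c|) := by
        have h2 := hΨge y (subset_closure hy)
        have h3 : 2 * t * |c| ≤ 2 * t * (s * (∑ i, gradv u y i * v i)) :=
          mul_le_mul_of_nonneg_left h2 (by linarith)
        have h4 : 2*ξ*(∑ i, gradv u y i * v i) = -(2 * t * (s * (∑ i, gradv u y i * v i))) := by
          rw [hξ]; ring
        rw [h4]
        linarith
      have b3 : ξ^2 * ∑ i, (v i)^2 ≤ t * |c| := by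
        have hξ2 : ξ^2 = t^2 := by
          rw [hξ]
          have h5 : (-(s*t))^2 = s^2 * t^2 := by ring
          rw [h5, hs2, one_mul]
        rw [hξ2, ← htV]
        have h1 : t^2 * ∑ i, (v i)^2 ≤ t^2 * V^2 :=
          mul_le_mul_of_nonneg_left hvV (sq_nonneg t)
        calc t^2 * ∑ i, (v i)^2 ≤ t^2 * V^2 := h1
          _ = t * (t * V^2) := by ring
          _ ≤ t * (t * V^2) := le_rfl
      linarith
    -- contradiction
    have hineq := h Ω' Metric.isOpen_ball Metric.isBounded_ball hclΩ xr hxrK hsup ξ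
    have hlt : sSup ((fun y => gnorm (gradv u y + ξ • v)) '' Ω')
        ≤ Real.sqrt (M ^ 2 - t * |c|) := by
      refine csSup_le (hΩ'ne.image _) ?_
      rintro a ⟨y, hy, rfl⟩
      exact hbound y hy
    have hfinal : Real.sqrt (M ^ 2 - t * |c|) < M := by
      rw [Real.sqrt_lt' hM0]
      have : 0 < t * |c| := mul_pos ht0 habs
      linarith
    rw [← hsup] at hineq
    have : M ≤ Real.sqrt (M ^ 2 - t * |c|) := le_trans hineq hlt
    linarith
end

section
/- Let Ω ⊆ ℝⁿ be open and u ∈ C²(Ω, ℝᴺ). Then every diffuse hessian of u equals the Dirac measure at the classical hessian: 𝒟²u(x) = δ_{D²u(x)} for almost every x ∈ Ω. Consequently, u is a 𝒟-solution of a system F(Du, D²u) = 0 (with F Borel in the first and continuous in the second argument) if and only if u is a classical solution, i.e. F(Du(x), D²u(x)) = 0 for a.e. x ∈ Ω. -/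
/-
For `u ∈ C²` the difference quotients `D^{1,h}Du(x)` converge to `D²u(x)` at every point of `Ω`,
so by dominated convergence every diffuse hessian `ϑ` satisfies
`∫_Ω ∫ Φ(x, X) dϑ_x(X) dx = ∫_Ω Φ(x, D²u(x)) dx` for all integrands `Φ ∈ L¹(Ω, C⁰)`.
Testing with `Φ(x, X) = f(x) g(X)` gives `∫ g dϑ_x = g(D²u(x))` for a.e. `x`, for each fixed
continuous `g`. Applied to the countably many functions `X ↦ min (|X - q|, 1)`, `q` in a dense
set, and extended to all `q` by continuity, this forces `ϑ_x = δ_{D²u(x)}`. The equivalence of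
`𝒟`-solutions and classical solutions follows, since `supp δ_a = {a}` and `δ_{D²u}` is itself a
diffuse hessian.
-/

open scoped BigOperators
open MeasureTheory Filter

/-- The difference quotients `D^{1,h}Du(x)` of the gradient, as a tensor:
`(D^{1,h}Du(x))_{αij} = (D_j u_α(x + h e_i) − D_j u_α(x))/h`. -/
noncomputable def Dq {n N : ℕ} (u : (Fin n → ℝ) → (Fin N → ℝ)) (h : ℝ) (x : Fin n → ℝ) :
    Fin N → Fin n → Fin n → ℝ :=
  fun α i j => (gradm u (fun k => x k + (if k = i then h else 0)) α j - gradm u x α j) / h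

/-- The Borel σ-algebra on the one-point compactification of the tensor space. -/
noncomputable instance {n N : ℕ} :
    MeasurableSpace (OnePoint (Fin N → Fin n → Fin n → ℝ)) := borel _

/-- A map `ϑ` into probability measures on the one-point compactification of the tensor
space is a diffuse hessian of `u` on `Ω` when it is a weak* limit in the Young measures of
the Dirac measures of difference quotients `δ_{D^{1,h_ν}Du}` along an infinitesimal
sequence `h_ν → 0`, tested against all integrands `Φ ∈ L¹(Ω, C⁰(compactification))`. -/
def DiffuseHessian {n N : ℕ} (Ω : Set (Fin n → ℝ))
    (u : (Fin n → ℝ) → (Fin N → ℝ))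
    (ϑ : (Fin n → ℝ) → Measure (OnePoint (Fin N → Fin n → Fin n → ℝ))) : Prop :=
  (∀ x, IsProbabilityMeasure (ϑ x)) ∧
  ∃ hs : ℕ → ℝ, (∀ k, hs k ≠ 0) ∧ Tendsto hs atTop (nhds 0) ∧
    ∀ Φ : (Fin n → ℝ) → C(OnePoint (Fin N → Fin n → Fin n → ℝ), ℝ),
      Integrable Φ (volume.restrict Ω) →
      Tendsto (fun k => ∫ x in Ω, Φ x (OnePoint.some (Dq u (hs k) x)))
        atTop (nhds (∫ x in Ω, ∫ X, Φ x X ∂(ϑ x)))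

/-- Membership in the support of a measure on a topological space. -/
def MemSupp {S : Type*} [TopologicalSpace S] [MeasurableSpace S]
    (ϑ : MeasureTheory.Measure S) (X : S) : Prop :=
  ∀ U : Set S, IsOpen U → X ∈ U → 0 < ϑ U

/-- The hessian tensor `D²u(x)`, with `(D²u(x))_{αij} = D_i D_j u_α (x)`. -/
noncomputable def hessTensor {n N : ℕ} (u : (Fin n → ℝ) → (Fin N → ℝ)) (x : Fin n → ℝ) :
    Fin N → Fin n → Fin n → ℝ :=
  fun α i j => fderiv ℝ (fun y => gradm u y α j) x (Pi.single i 1)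

open Topology

section IntegralMul

variable {α : Type*} [MeasurableSpace α] {μ : Measure α}

lemma exists_integrable_pos [SigmaFinite μ] :
    ∃ f : α → ℝ, Measurable f ∧ Integrable f μ ∧ ∀ x, 0 < f x := by
  obtain ⟨g, hg0, hgm, hgi⟩ := exists_pos_lintegral_lt_of_sigmaFinite μ one_ne_zero
  refine ⟨fun x => g x, hgm.coe_nnreal_real, ⟨hgm.coe_nnreal_real.aestronglyMeasurable, ?_⟩,
    fun x => NNReal.coe_pos.2 (hg0 x)⟩
  simpa [HasFiniteIntegral] using hgi.trans ENNReal.one_lt_top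

lemma aestronglyMeasurable_of_integral_mul_ne_zero {f ψ : α → ℝ} (hf : Measurable f)
    (hf0 : ∀ x, f x ≠ 0) (h : ∫ x, f x * ψ x ∂μ ≠ 0) : AEStronglyMeasurable ψ μ := by
  by_contra hψ
  refine h (integral_non_aestronglyMeasurable fun hfψ => hψ ?_)
  have hψ_eq : (fun x => (f x)⁻¹ * (f x * ψ x)) = ψ :=
    funext fun x => inv_mul_cancel_left₀ (hf0 x) _
  exact hψ_eq ▸ hf.inv.aestronglyMeasurable.mul hfψ

lemma ae_eq_of_forall_integral_mul_eq [SigmaFinite μ] {ψ φ : α → ℝ}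
    (hψ : AEStronglyMeasurable ψ μ) (hφ : AEStronglyMeasurable φ μ) {C : ℝ}
    (hψC : ∀ x, ‖ψ x‖ ≤ C) (hφC : ∀ x, ‖φ x‖ ≤ C)
    (h : ∀ f, Integrable f μ → ∫ x, f x * ψ x ∂μ = ∫ x, f x * φ x ∂μ) : ψ =ᵐ[μ] φ := by
  refine ae_eq_of_forall_setIntegral_eq_of_sigmaFinite
    (fun s _ hs => Measure.integrableOn_of_bounded hs.ne hψ (.of_forall hψC))
    (fun s _ hs => Measure.integrableOn_of_bounded hs.ne hφ (.of_forall hφC))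
    fun s hs hμs => ?_
  have h1 := h (s.indicator 1) ((integrable_indicator_iff hs).2 (integrableOn_const hμs.ne))
  simp only [← Set.indicator_mul_left, Pi.one_apply, one_mul, integral_indicator hs] at h1
  exact h1

end IntegralMul

lemma ContinuousMap.integrable {X : Type*} [TopologicalSpace X] [CompactSpace X]
    [MeasurableSpace X] [OpensMeasurableSpace X] {ν : Measure X} [IsFiniteMeasure ν]
    (g : C(X, ℝ)) : Integrable g ν :=
  g.continuous.integrable_of_hasCompactSupport (.of_compactSpace _)

section TruncDist

variable {E : Type*} [MetricSpace E] [ProperSpace E]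

noncomputable def OnePoint.truncDist (q : E) : C(OnePoint E, ℝ) :=
  OnePoint.continuousMapMk ⟨fun y => min (dist y q) 1, by fun_prop⟩ 1 <| by
    rw [coclosedCompact_eq_cocompact]
    refine tendsto_const_nhds.congr' ?_
    filter_upwards [(tendsto_dist_right_cocompact_atTop q).eventually_ge_atTop 1] with y hy
    exact (min_eq_right hy).symm

namespace OnePoint

@[simp] lemma truncDist_coe (q y : E) : truncDist q y = min (dist y q) 1 := rfl

@[simp] lemma truncDist_infty (q : E) : truncDist q ∞ = 1 := rfl

lemma truncDist_nonneg (q : E) (X : OnePoint E) : 0 ≤ truncDist q X := by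
  induction X using OnePoint.rec <;> simp [dist_nonneg]

lemma truncDist_eq_zero_iff {q : E} {X : OnePoint E} : truncDist q X = 0 ↔ X = q := by
  induction X using OnePoint.rec <;> simp +contextual [min_eq_iff]

lemma lipschitzWith_truncDist_apply (X : OnePoint E) :
    LipschitzWith 1 fun q : E => truncDist q X := by
  induction X using OnePoint.rec with
  | infty => simpa using LipschitzWith.const' (α := E) (1 : ℝ)
  | coe y => simpa using (LipschitzWith.dist_right y).min_const 1

variable [MeasurableSpace (OnePoint E)] [BorelSpace (OnePoint E)]
  {ν : Measure (OnePoint E)} [IsProbabilityMeasure ν]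

lemma lipschitzWith_integral_truncDist :
    LipschitzWith 1 fun q : E => ∫ X, truncDist q X ∂ν := by
  refine LipschitzWith.of_dist_le_mul fun q q' => ?_
  rw [NNReal.coe_one, one_mul, dist_eq_norm, ← integral_sub (truncDist q).integrable
    (truncDist q').integrable]
  refine (norm_integral_le_of_norm_le_const (C := dist q q')
    (Eventually.of_forall fun X => ?_)).trans (le_of_eq (by simp))
  rw [← dist_eq_norm]
  simpa using (lipschitzWith_truncDist_apply X).dist_le_mul q q'

lemma eq_dirac_of_integral_truncDist_eq_zero {t : E} (h : ∫ X, truncDist t X ∂ν = 0) :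
    ν = Measure.dirac (t : OnePoint E) := by
  have hae : ∀ᵐ X ∂ν, X ∈ ({(t : OnePoint E)} : Finset (OnePoint E)) := by
    filter_upwards [(integral_eq_zero_iff_of_nonneg (truncDist_nonneg t)
      (truncDist t).integrable).mp h] with X hX
    simpa using truncDist_eq_zero_iff.mp hX
  rw [Measure.ae_mem_finset_iff, Finset.sum_singleton] at hae
  have hmass := measure_univ (μ := ν)
  rw [hae] at hmass
  simp only [Measure.smul_apply, measure_univ, smul_eq_mul, mul_one] at hmass
  rw [hae, hmass, one_smul]

lemma eq_dirac_of_forall_integral_truncDist_eq {Q : Set E} (hQ : Dense Q) {t : E}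
    (h : ∀ q ∈ Q, ∫ X, truncDist q X ∂ν = truncDist q t) :
    ν = Measure.dirac (t : OnePoint E) := by
  refine eq_dirac_of_integral_truncDist_eq_zero ?_
  have hcont : Continuous fun q : E => truncDist q (t : OnePoint E) :=
    (lipschitzWith_truncDist_apply _).continuous
  simpa using congrFun (Continuous.ext_on hQ lipschitzWith_integral_truncDist.continuous hcont h) t

end OnePoint
end TruncDist

instance {n N : ℕ} : BorelSpace (OnePoint (Fin N → Fin n → Fin n → ℝ)) := ⟨rfl⟩

variable {n N : ℕ} {u : (Fin n → ℝ) → (Fin N → ℝ)}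

@[fun_prop]
lemma measurable_gradm_apply (α : Fin N) (j : Fin n) : Measurable fun x => gradm u x α j :=
  (measurable_pi_apply α).comp (measurable_fderiv_apply_const ℝ u _)

lemma measurable_hessTensor : Measurable (hessTensor u) :=
  measurable_pi_lambda _ fun _ => measurable_pi_lambda _ fun _ => measurable_pi_lambda _ fun _ =>
    measurable_fderiv_apply_const ℝ _ _

lemma measurable_Dq (h : ℝ) : Measurable (Dq u h) := by
  unfold Dq
  fun_prop

lemma differentiableAt_gradm_apply {x : Fin n → ℝ} (hu : DifferentiableAt ℝ (fderiv ℝ u) x)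
    (α : Fin N) (j : Fin n) : DifferentiableAt ℝ (fun y => gradm u y α j) x :=
  differentiableAt_pi.mp (hu.clm_apply (differentiableAt_const _)) α

lemma tendsto_Dq_hessTensor {x : Fin n → ℝ} (hu : DifferentiableAt ℝ (fderiv ℝ u) x) :
    Tendsto (fun h => Dq u h x) (𝓝[≠] 0) (𝓝 (hessTensor u x)) := by
  refine tendsto_pi_nhds.2 fun α => tendsto_pi_nhds.2 fun i => tendsto_pi_nhds.2 fun j => ?_
  have hline : HasDerivAt (fun t : ℝ => x + t • (Pi.single i 1 : Fin n → ℝ))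
      (Pi.single i 1) 0 := by
    simpa using ((hasDerivAt_id (0 : ℝ)).smul_const (Pi.single i 1 : Fin n → ℝ)).const_add x
  have hd := ((differentiableAt_gradm_apply hu α j).hasFDerivAt.comp_hasDerivAt_of_eq 0 hline
    (by simp)).tendsto_slope_zero
  refine hd.congr fun h => ?_
  have hshift : (fun k => x k + if k = i then h else 0) = x + h • Pi.single i 1 := by
    funext k
    simp [Pi.single_apply]
  simp [Dq, hshift, div_eq_inv_mul]

lemma differentiableAt_fderiv_of_contDiffOn {Ω : Set (Fin n → ℝ)} (hΩ : IsOpen Ω)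
    (hu : ContDiffOn ℝ 2 u Ω) {x : Fin n → ℝ} (hx : x ∈ Ω) :
    DifferentiableAt ℝ (fderiv ℝ u) x :=
  ((hu.fderiv_of_isOpen hΩ (by norm_num)).differentiableOn one_ne_zero).differentiableAt
    (hΩ.mem_nhds hx)

lemma tendsto_setIntegral_Dq {Ω : Set (Fin n → ℝ)} (hΩ : IsOpen Ω) (hu : ContDiffOn ℝ 2 u Ω)
    {Φ : (Fin n → ℝ) → C(OnePoint (Fin N → Fin n → Fin n → ℝ), ℝ)}
    (hΦ : Integrable Φ (volume.restrict Ω)) :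
    Tendsto (fun h => ∫ x in Ω, Φ x (Dq u h x)) (𝓝[≠] 0)
      (𝓝 (∫ x in Ω, Φ x (hessTensor u x))) := by
  refine tendsto_integral_filter_of_dominated_convergence (fun x => ‖Φ x‖)
    (Eventually.of_forall fun h => ?_) (Eventually.of_forall fun h => ?_) hΦ.norm ?_
  · exact continuous_eval.comp_aestronglyMeasurable (hΦ.aestronglyMeasurable.prodMk
      (OnePoint.continuous_coe.comp_stronglyMeasurable
        (measurable_Dq h).stronglyMeasurable).aestronglyMeasurable)
  · exact Eventually.of_forall fun x => (Φ x).norm_coe_le_norm _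
  · filter_upwards [ae_restrict_mem hΩ.measurableSet] with x hx
    exact ((Φ x).continuous.comp OnePoint.continuous_coe).continuousAt.tendsto.comp
      (tendsto_Dq_hessTensor (differentiableAt_fderiv_of_contDiffOn hΩ hu hx))

variable {Ω : Set (Fin n → ℝ)} {ϑ : (Fin n → ℝ) → Measure (OnePoint (Fin N → Fin n → Fin n → ℝ))}

lemma DiffuseHessian.setIntegral_integral_eq (hϑ : DiffuseHessian Ω u ϑ) (hΩ : IsOpen Ω)
    (hu : ContDiffOn ℝ 2 u Ω) {Φ : (Fin n → ℝ) → C(OnePoint (Fin N → Fin n → Fin n → ℝ), ℝ)}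
    (hΦ : Integrable Φ (volume.restrict Ω)) :
    ∫ x in Ω, ∫ X, Φ x X ∂(ϑ x) = ∫ x in Ω, Φ x (hessTensor u x) := by
  obtain ⟨-, hs, hs0, hslim, hconv⟩ := hϑ
  exact tendsto_nhds_unique (hconv Φ hΦ) ((tendsto_setIntegral_Dq hΩ hu hΦ).comp
    (tendsto_nhdsWithin_iff.2 ⟨hslim, Eventually.of_forall hs0⟩))

lemma diffuseHessian_dirac_hessTensor (hΩ : IsOpen Ω) (hu : ContDiffOn ℝ 2 u Ω) :
    DiffuseHessian Ω u fun x => Measure.dirac (hessTensor u x : OnePoint _) := by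
  have hlim : Tendsto (fun k : ℕ => ((k : ℝ) + 1)⁻¹) atTop (𝓝 0) :=
    tendsto_one_div_add_atTop_nhds_zero_nat.congr fun k => one_div _
  have hne : ∀ k : ℕ, ((k : ℝ) + 1)⁻¹ ≠ 0 := fun k => inv_ne_zero (Nat.cast_add_one_ne_zero k)
  refine ⟨fun x => inferInstance, _, hne, hlim, fun Φ hΦ => ?_⟩
  simp only [integral_dirac]
  exact (tendsto_setIntegral_Dq hΩ hu hΦ).comp
    (tendsto_nhdsWithin_iff.2 ⟨hlim, Eventually.of_forall hne⟩)

lemma DiffuseHessian.setIntegral_mul_integral_eq (hϑ : DiffuseHessian Ω u ϑ) (hΩ : IsOpen Ω)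
    (hu : ContDiffOn ℝ 2 u Ω) (g : C(OnePoint (Fin N → Fin n → Fin n → ℝ), ℝ))
    {f : (Fin n → ℝ) → ℝ} (hf : Integrable f (volume.restrict Ω)) :
    ∫ x in Ω, f x * ∫ X, g X ∂(ϑ x) = ∫ x in Ω, f x * g (hessTensor u x) := by
  simpa [integral_const_mul] using hϑ.setIntegral_integral_eq hΩ hu (hf.smul_const g)

lemma DiffuseHessian.norm_integral_le (hϑ : DiffuseHessian Ω u ϑ)
    (g : C(OnePoint (Fin N → Fin n → Fin n → ℝ), ℝ)) (x : Fin n → ℝ) :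
    ‖∫ X, g X ∂(ϑ x)‖ ≤ ‖g‖ := by
  have := hϑ.1 x
  simpa using norm_integral_le_of_norm_le_const (μ := ϑ x)
    (Eventually.of_forall fun X => g.norm_coe_le_norm X)

/- `ϑ` need not depend measurably on `x`. If `x ↦ ∫ g' dϑ x` were not a.e. measurable, the left
side of the Young identity would be the junk value `0`, while the shift `g' = g + ‖g‖ + 1 > 0`
makes the right side positive. -/
lemma DiffuseHessian.aestronglyMeasurable_integral (hϑ : DiffuseHessian Ω u ϑ) (hΩ : IsOpen Ω)
    (hu : ContDiffOn ℝ 2 u Ω) (g : C(OnePoint (Fin N → Fin n → Fin n → ℝ), ℝ)) :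
    AEStronglyMeasurable (fun x => ∫ X, g X ∂(ϑ x)) (volume.restrict Ω) := by
  rcases eq_zero_or_neZero (volume.restrict Ω) with hΩ0 | hΩ0
  · rw [hΩ0]
    exact aestronglyMeasurable_zero_measure _
  obtain ⟨f, hfm, hfi, hf0⟩ := exists_integrable_pos (μ := volume.restrict Ω)
  set c := ‖g‖ + 1
  set g' : C(OnePoint (Fin N → Fin n → Fin n → ℝ), ℝ) := g + ContinuousMap.const _ c
  have hshift : ∀ x, ∫ X, g' X ∂(ϑ x) = ∫ X, g X ∂(ϑ x) + c := fun x => by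
    have := hϑ.1 x
    simp [g', integral_add g.integrable (integrable_const c)]
  have hg'_pos : ∀ X, 0 < g' X := fun X => by
    have := neg_abs_le (g X)
    have := g.norm_coe_le_norm X
    simp only [g', ContinuousMap.add_apply, ContinuousMap.const_apply, Real.norm_eq_abs] at *
    linarith
  have hint : Integrable (fun x => f x * g' (hessTensor u x)) (volume.restrict Ω) :=
    hfi.mul_bdd (g'.continuous.measurable.comp
      (OnePoint.continuous_coe.measurable.comp measurable_hessTensor)).aestronglyMeasurable
      (.of_forall fun x => g'.norm_coe_le_norm _)
  have hpos : 0 < ∫ x in Ω, f x * g' (hessTensor u x) := by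
    rw [integral_pos_iff_support_of_nonneg (fun x => (mul_pos (hf0 x) (hg'_pos _)).le) hint,
      Function.support_eq_univ fun x => (mul_pos (hf0 x) (hg'_pos _)).ne']
    exact Measure.measure_univ_pos.2 (NeZero.ne _)
  rw [← hϑ.setIntegral_mul_integral_eq hΩ hu _ hfi] at hpos
  have := aestronglyMeasurable_of_integral_mul_ne_zero hfm (fun x => (hf0 x).ne') hpos.ne'
  simp only [hshift] at this
  simpa using this.add_const (-c)

lemma DiffuseHessian.integral_ae_eq (hϑ : DiffuseHessian Ω u ϑ) (hΩ : IsOpen Ω)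
    (hu : ContDiffOn ℝ 2 u Ω) (g : C(OnePoint (Fin N → Fin n → Fin n → ℝ), ℝ)) :
    (fun x => ∫ X, g X ∂(ϑ x)) =ᵐ[volume.restrict Ω] fun x => g (hessTensor u x) :=
  ae_eq_of_forall_integral_mul_eq (hϑ.aestronglyMeasurable_integral hΩ hu g)
    (g.continuous.measurable.comp
      (OnePoint.continuous_coe.measurable.comp measurable_hessTensor)).aestronglyMeasurable
    (hϑ.norm_integral_le g) (fun _ => g.norm_coe_le_norm _)
    fun _ hf => hϑ.setIntegral_mul_integral_eq hΩ hu g hf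

lemma DiffuseHessian.ae_eq_dirac (hϑ : DiffuseHessian Ω u ϑ) (hΩ : IsOpen Ω)
    (hu : ContDiffOn ℝ 2 u Ω) :
    ∀ᵐ x ∂(volume.restrict Ω), ϑ x = Measure.dirac (hessTensor u x : OnePoint _) := by
  obtain ⟨Q, hQc, hQd⟩ := TopologicalSpace.exists_countable_dense (Fin N → Fin n → Fin n → ℝ)
  have hQ := (ae_ball_iff hQc).2 fun q _ => hϑ.integral_ae_eq hΩ hu (OnePoint.truncDist q)
  filter_upwards [hQ] with x hx
  have := hϑ.1 x
  exact OnePoint.eq_dirac_of_forall_integral_truncDist_eq hQd hx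

lemma memSupp_dirac_iff {S : Type*} [TopologicalSpace S] [T1Space S] [MeasurableSpace S]
    [OpensMeasurableSpace S] {a X : S} : MemSupp (Measure.dirac a) X ↔ X = a := by
  refine ⟨fun hX => by_contra fun hne => ?_, ?_⟩
  · have := hX _ isOpen_compl_singleton hne
    simp [Measure.dirac_apply' _ isOpen_compl_singleton.measurableSet] at this
  · rintro rfl U _ hU
    simp [Measure.dirac_apply_of_mem hU]

theorem stmt18_general {n N : ℕ} (Ω : Set (Fin n → ℝ)) (hΩ : IsOpen Ω)
    (u : (Fin n → ℝ) → (Fin N → ℝ)) (hu : ContDiffOn ℝ 2 u Ω)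
    (F : (Fin N → Fin n → ℝ) → (Fin N → Fin n → Fin n → ℝ) → (Fin N → ℝ)) :
    (∀ ϑ : (Fin n → ℝ) → MeasureTheory.Measure (OnePoint (Fin N → Fin n → Fin n → ℝ)),
      DiffuseHessian Ω u ϑ →
        ∀ᵐ x ∂(MeasureTheory.volume.restrict Ω),
          ϑ x = MeasureTheory.Measure.dirac (OnePoint.some (hessTensor u x))) ∧
    ((∀ ϑ : (Fin n → ℝ) → MeasureTheory.Measure (OnePoint (Fin N → Fin n → Fin n → ℝ)),
        DiffuseHessian Ω u ϑ →
          ∀ᵐ x ∂(MeasureTheory.volume.restrict Ω),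
            ∀ X : Fin N → Fin n → Fin n → ℝ,
              MemSupp (ϑ x) (OnePoint.some X) → F (gradm u x) X = 0) ↔
      (∀ᵐ x ∂(MeasureTheory.volume.restrict Ω),
        F (gradm u x) (hessTensor u x) = 0)) := by
  refine ⟨fun ϑ hϑ => hϑ.ae_eq_dirac hΩ hu, fun hD => ?_, fun hF ϑ hϑ => ?_⟩
  · filter_upwards [hD _ (diffuseHessian_dirac_hessTensor hΩ hu)] with x hx
    exact hx _ (memSupp_dirac_iff.2 rfl)
  · filter_upwards [hϑ.ae_eq_dirac hΩ hu, hF] with x hx hFx X hX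
    rw [hx, memSupp_dirac_iff, OnePoint.coe_eq_coe] at hX
    rwa [hX]

/-- for `u ∈ C²(Ω, ℝᴺ)`, every diffuse hessian is a.e. the Dirac mass at the
classical hessian, and hence `u` is a `𝒟`-solution of `F(Du, D²u) = 0` iff it is a
classical (strong) solution a.e. on `Ω`. -/
theorem stmt18 {n N : ℕ} (Ω : Set (Fin n → ℝ)) (hΩ : IsOpen Ω)
    (u : (Fin n → ℝ) → (Fin N → ℝ)) (hu : ContDiffOn ℝ 2 u Ω)
    (F : (Fin N → Fin n → ℝ) → (Fin N → Fin n → Fin n → ℝ) → (Fin N → ℝ))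
    (hF1 : ∀ X, Measurable fun P => F P X)
    (hF2 : ∀ P, Continuous (F P)) :
    (∀ ϑ : (Fin n → ℝ) → MeasureTheory.Measure (OnePoint (Fin N → Fin n → Fin n → ℝ)),
      DiffuseHessian Ω u ϑ →
        ∀ᵐ x ∂(MeasureTheory.volume.restrict Ω),
          ϑ x = MeasureTheory.Measure.dirac (OnePoint.some (hessTensor u x))) ∧
    ((∀ ϑ : (Fin n → ℝ) → MeasureTheory.Measure (OnePoint (Fin N → Fin n → Fin n → ℝ)),
        DiffuseHessian Ω u ϑ →
          ∀ᵐ x ∂(MeasureTheory.volume.restrict Ω),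
            ∀ X : Fin N → Fin n → Fin n → ℝ,
              MemSupp (ϑ x) (OnePoint.some X) → F (gradm u x) X = 0) ↔
      (∀ᵐ x ∂(MeasureTheory.volume.restrict Ω),
        F (gradm u x) (hessTensor u x) = 0)) :=
  stmt18_general Ω hΩ u hu F
end
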